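/- A real symmetric symplectic 4×4 matrix X = a M_{1⊗1} + M_{p⊗i} + M_{q⊗j} + M_{r⊗k} is positive definite if and only if a > 0 and 2a² − 2 q·q + 1 > 0. In particular, if a > 0 and q = 0, then X is positive definite. -/

import Mathlib

open Matrix Quaternion

noncomputable def quatBasis : Module.Basis (Fin 4) ℝ (Quaternion ℝ) :=
  Module.Basis.ofEquivFun (QuaternionAlgebra.linearEquivTuple (-1 : ℝ) (0 : ℝ) (-1 : ℝ))

/-- The 4×4 real matrix of the ℝ-linear map `x ↦ p * x * star q` on ℍ ≅ ℝ⁴. -/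
noncomputable def quatM (p q : Quaternion ℝ) : Matrix (Fin 4) (Fin 4) ℝ :=
  LinearMap.toMatrix quatBasis quatBasis
    ((LinearMap.mulLeft ℝ p).comp (LinearMap.mulRight ℝ (star q)))

def qi : Quaternion ℝ := ⟨0, 1, 0, 0⟩
def qj : Quaternion ℝ := ⟨0, 0, 1, 0⟩
def qk : Quaternion ℝ := ⟨0, 0, 0, 1⟩

/-- Dot product of the imaginary (vector) parts of two quaternions. -/
def qdot (x y : Quaternion ℝ) : ℝ := x.imI * y.imI + x.imJ * y.imJ + x.imK * y.imK

/-- Cross product of the imaginary (vector) parts, as a pure quaternion. -/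
def qcross (x y : Quaternion ℝ) : Quaternion ℝ :=
  ⟨0, x.imJ * y.imK - x.imK * y.imJ, x.imK * y.imI - x.imI * y.imK,
    x.imI * y.imJ - x.imJ * y.imI⟩

/-!
Write `X = a + U + V` with `U = M_{p⊗i} + M_{r⊗k}` and `V = M_{q⊗j}`. Since `(p, q) ↦ M_{p⊗q}` is
multiplicative, the constraints on `a, p, q, r` make `Y = a - U + V` the inverse of `X`, so
`X + X⁻¹ = 2 (a + V)` with `V² = |q|²`. Then `(X + 1)² = 2 X (a + 1 + V)`, hence
`(X + 1) (a + 1 - V) (X + 1) = 2 ((a + 1)² - |q|²) X`, and `a + 1 - V` is positive definite as soon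
as `a + 1 > |q|`; this congruence proves `X` positive definite. Conversely `tr X = 4a` and
`tr X² = 4 (a² + |p|² + |q|² + |r|²)`, while `tr A² < (tr A)²` for every positive definite `A` of
size at least two, because `(tr A)² - tr A²` is twice the sum of the `2 × 2` principal minors.
-/

theorem Matrix.PosDef.mul_lt_diag_mul_diag {n : Type*} {A : Matrix n n ℝ} (hA : A.PosDef) {i j : n}
    (hij : i ≠ j) : A i j * A j i < A i i * A j j := by
  have hinj : Function.Injective ![i, j] := by
    intro x y; fin_cases x <;> fin_cases y <;> simp [hij, hij.symm]
  have := (hA.submatrix hinj).det_pos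
  rw [det_fin_two] at this
  simpa using this

section
variable {n : Type*} [Fintype n]

theorem Matrix.PosDef.trace_mul_self_lt_sq_trace {A : Matrix n n ℝ} (hA : A.PosDef)
    (hn : 1 < Fintype.card n) : (A * A).trace < A.trace ^ 2 := by
  have hdiff : A.trace ^ 2 - (A * A).trace = ∑ i, ∑ j, (A i i * A j j - A i j * A j i) := by
    simp only [trace, diag, mul_apply, sq, Finset.sum_mul_sum, ← Finset.sum_sub_distrib]
  obtain ⟨i, j, hij⟩ := Fintype.exists_pair_of_one_lt_card hn
  have hminor : ∀ k l, 0 ≤ A k k * A l l - A k l * A l k := fun k l => by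
    rcases eq_or_ne k l with rfl | hkl
    · simp
    · exact (sub_pos.mpr (hA.mul_lt_diag_mul_diag hkl)).le
  have : 0 < ∑ i, ∑ j, (A i i * A j j - A i j * A j i) :=
    Finset.sum_pos' (fun k _ => Finset.sum_nonneg fun l _ => hminor k l)
      ⟨i, Finset.mem_univ _, Finset.sum_pos' (fun l _ => hminor i l)
        ⟨j, Finset.mem_univ _, sub_pos.mpr (hA.mul_lt_diag_mul_diag hij)⟩⟩
  linarith

theorem Matrix.PosDef.of_add_one_mul_mul_add_one [DecidableEq n] {X N : Matrix n n ℝ} {k : ℝ}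
    (hX : X.IsHermitian) (hN : N.PosDef) (hk : 0 < k)
    (h : (X + 1) * N * (X + 1) = k • X) : X.PosDef := by
  have hinj : Function.Injective (X + 1).mulVec := by
    refine (injective_iff_map_eq_zero (X + 1).mulVecLin).mpr fun v (hv : (X + 1) *ᵥ v = 0) => ?_
    have hXv : X *ᵥ v = 0 := by
      have : k • (X *ᵥ v) = 0 := by
        rw [← smul_mulVec, ← h, ← mulVec_mulVec, hv, mulVec_zero]
      exact (smul_eq_zero.mp this).resolve_left hk.ne'
    simpa [add_mulVec, hXv] using hv
  have hXh : (X + 1)ᴴ = X + 1 := by rw [conjTranspose_add, hX.eq, conjTranspose_one]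
  have := (hN.conjTranspose_mul_mul_same hinj).smul (inv_pos.mpr hk)
  rwa [hXh, h, smul_smul, inv_mul_cancel₀ hk.ne', one_smul] at this

theorem Matrix.posDef_smul_one_sub [DecidableEq n] {V : Matrix n n ℝ} {t c : ℝ} (hV : V.IsHermitian)
    (hVV : V * V = t • 1) (hc : 0 < c) (ht : t < c ^ 2) : (c • 1 - V).PosDef := by
  have key : (2 * c) • (c • 1 - V) = (c • 1 - V)ᴴ * (c • 1 - V) + (c ^ 2 - t) • 1 := by
    rw [conjTranspose_sub, hV.eq, conjTranspose_smul, conjTranspose_one, star_trivial]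
    simp only [sub_mul, mul_sub, mul_one, one_mul, smul_mul_assoc, mul_smul_comm, hVV]
    module
  have hpos := PosDef.posSemidef_add (posSemidef_conjTranspose_mul_self (c • 1 - V))
    (PosDef.one.smul (sub_pos.mpr ht))
  have := hpos.smul (inv_pos.mpr (by positivity : 0 < 2 * c))
  rwa [← key, smul_smul, inv_mul_cancel₀ (by positivity), one_smul] at this

theorem Matrix.posDef_of_mul_eq_one_of_add_eq [DecidableEq n] {X Y V : Matrix n n ℝ} {a t : ℝ}
    (hX : X.IsHermitian) (hV : V.IsHermitian) (hXY : X * Y = 1)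
    (hsum : X + Y = (2 : ℝ) • (a • 1 + V)) (hVV : V * V = t • 1)
    (ha : 0 < a + 1) (ht : t < (a + 1) ^ 2) : X.PosDef := by
  have hV' : V = (2⁻¹ : ℝ) • (X + Y) - a • 1 := by rw [hsum]; module
  have hXV : Commute X V := by
    rw [hV']
    refine ((Commute.add_right (Commute.refl X) ?_).smul_right _).sub_right
      ((Commute.one_right X).smul_right a)
    exact hXY.trans (mul_eq_one_comm.mp hXY).symm
  have hsq : (X + 1) * (X + 1) = (2 : ℝ) • (X * ((a + 1) • 1 + V)) := by
    have := congrArg (X * ·) hsum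
    simp only [mul_add, add_mul, mul_smul_comm, mul_one, one_mul, hXY] at this ⊢
    linear_combination (norm := module) this
  have hcomm : Commute (X + 1) ((a + 1) • 1 - V) :=
    (((Commute.one_right X).smul_right (a + 1)).sub_right hXV).add_left (Commute.one_left _)
  have hN := posDef_smul_one_sub hV hVV ha ht
  refine hN.of_add_one_mul_mul_add_one hX (k := 2 * ((a + 1) ^ 2 - t)) (by linarith) ?_
  calc (X + 1) * ((a + 1) • 1 - V) * (X + 1)
      = (X + 1) * (X + 1) * ((a + 1) • 1 - V) := by
        rw [mul_assoc, hcomm.symm.eq, ← mul_assoc]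
    _ = _ := by
        rw [hsq]
        simp only [mul_add, add_mul, mul_sub, smul_mul_assoc, mul_smul_comm, mul_one, mul_assoc,
          hVV]
        module

end

theorem Quaternion.mul_self_of_re_eq_zero {p : ℍ[ℝ]} (hp : p.re = 0) :
    p * p = -qdot p p • 1 := by
  ext <;> simp [qdot, hp, re_mul, imI_mul, imJ_mul, imK_mul] <;> ring

theorem Quaternion.mul_add_mul_swap_of_re_eq_zero {p q : ℍ[ℝ]} (hp : p.re = 0) (hq : q.re = 0) :
    p * q + q * p = -(2 * qdot p q) • 1 := by
  ext <;> simp [qdot, hp, hq, re_mul, imI_mul, imJ_mul, imK_mul] <;> ring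

theorem Quaternion.mul_sub_mul_swap_of_re_eq_zero {p q : ℍ[ℝ]} (hp : p.re = 0) (hq : q.re = 0) :
    p * q - q * p = (2 : ℝ) • qcross p q := by
  ext <;> simp only [re_mul, imI_mul, imJ_mul, imK_mul, re_sub, imI_sub, imJ_sub, imK_sub,
    re_smul, imI_smul, imJ_smul, imK_smul] <;> simp [qcross, hp, hq] <;> ring

theorem qi_mul_qi : qi * qi = -1 := by
  ext <;> simp [re_mul, imI_mul, imJ_mul, imK_mul] <;> simp [qi]

theorem qj_mul_qj : qj * qj = -1 := by
  ext <;> simp [re_mul, imI_mul, imJ_mul, imK_mul] <;> simp [qj]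

theorem qk_mul_qk : qk * qk = -1 := by
  ext <;> simp [re_mul, imI_mul, imJ_mul, imK_mul] <;> simp [qk]

theorem qi_mul_qj : qi * qj = qk := by
  ext <;> simp [re_mul, imI_mul, imJ_mul, imK_mul] <;> simp [qi, qj, qk]

theorem qj_mul_qi : qj * qi = -qk := by
  ext <;> simp [re_mul, imI_mul, imJ_mul, imK_mul] <;> simp [qi, qj, qk]

theorem qj_mul_qk : qj * qk = qi := by
  ext <;> simp [re_mul, imI_mul, imJ_mul, imK_mul] <;> simp [qi, qj, qk]

theorem qk_mul_qj : qk * qj = -qi := by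
  ext <;> simp [re_mul, imI_mul, imJ_mul, imK_mul] <;> simp [qi, qj, qk]

theorem qk_mul_qi : qk * qi = qj := by
  ext <;> simp [re_mul, imI_mul, imJ_mul, imK_mul] <;> simp [qi, qj, qk]

theorem qi_mul_qk : qi * qk = -qj := by
  ext <;> simp [re_mul, imI_mul, imJ_mul, imK_mul] <;> simp [qi, qj, qk]

theorem quatM_mul_quatM (p q p' q' : ℍ[ℝ]) :
    quatM p q * quatM p' q' = quatM (p * p') (q * q') := by
  rw [quatM, quatM, quatM, ← LinearMap.toMatrix_mul]
  exact congrArg _ (LinearMap.ext fun x => by simp [mul_assoc])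

theorem quatM_one_one : quatM 1 1 = 1 := by
  rw [quatM, ← LinearMap.toMatrix_id quatBasis]
  exact congrArg _ (LinearMap.ext fun x => by simp)

theorem quatM_add_left (p p' q : ℍ[ℝ]) : quatM (p + p') q = quatM p q + quatM p' q := by
  rw [quatM, quatM, quatM, ← map_add]
  exact congrArg _ (LinearMap.ext fun x => by simp [add_mul])

theorem quatM_smul_left (c : ℝ) (p q : ℍ[ℝ]) : quatM (c • p) q = c • quatM p q := by
  rw [quatM, quatM, ← map_smul]
  exact congrArg _ (LinearMap.ext fun x => by simp)

theorem quatM_smul_right (c : ℝ) (p q : ℍ[ℝ]) : quatM p (c • q) = c • quatM p q := by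
  rw [quatM, quatM, ← map_smul]
  exact congrArg _ (LinearMap.ext fun x => by simp)

theorem quatM_neg_left (p q : ℍ[ℝ]) : quatM (-p) q = -quatM p q := by
  simpa using quatM_smul_left (-1) p q

theorem quatM_neg_right (p q : ℍ[ℝ]) : quatM p (-q) = -quatM p q := by
  simpa using quatM_smul_right (-1) p q

theorem quatM_smul_one_one (c : ℝ) : quatM (c • 1) 1 = c • 1 := by
  rw [quatM_smul_left, quatM_one_one]

theorem quatM_sub_left (p p' q : ℍ[ℝ]) : quatM (p - p') q = quatM p q - quatM p' q := by
  rw [sub_eq_add_neg, quatM_add_left, quatM_neg_left, sub_eq_add_neg]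

theorem quatBasis_apply (j : Fin 4) :
    quatBasis j = (![⟨1, 0, 0, 0⟩, ⟨0, 1, 0, 0⟩, ⟨0, 0, 1, 0⟩, ⟨0, 0, 0, 1⟩] j : ℍ[ℝ]) := by
  rw [quatBasis]
  erw [Module.Basis.coe_ofEquivFun]
  fin_cases j <;>
  · show (QuaternionAlgebra.equivTuple (-1 : ℝ) 0 (-1)).symm (Pi.single _ 1) = _
    ext <;> simp

theorem quatBasis_repr (x : ℍ[ℝ]) (i : Fin 4) :
    quatBasis.repr x i = ![x.re, x.imI, x.imJ, x.imK] i := by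
  fin_cases i <;> rfl

theorem quatM_apply (p q : ℍ[ℝ]) (i j : Fin 4) :
    quatM p q i j =
      ![(p * quatBasis j * star q).re, (p * quatBasis j * star q).imI,
        (p * quatBasis j * star q).imJ, (p * quatBasis j * star q).imK] i := by
  rw [quatM, LinearMap.toMatrix_apply, quatBasis_repr]
  simp [mul_assoc]

theorem quatM_transpose (p q : ℍ[ℝ]) : (quatM p q)ᵀ = quatM (star p) (star q) := by
  ext i j
  simp only [transpose_apply, quatM_apply, re_mul, imI_mul, imJ_mul, imK_mul, re_star, imI_star,
    imJ_star, imK_star]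
  fin_cases i <;> fin_cases j <;> simp [quatBasis_apply] <;> ring

theorem trace_quatM (p q : ℍ[ℝ]) : (quatM p q).trace = 4 * p.re * q.re := by
  simp only [trace, diag, Fin.sum_univ_four, quatM_apply, re_mul, imI_mul, imJ_mul, imK_mul,
    re_star, imI_star, imJ_star, imK_star]
  simp [quatBasis_apply]
  ring

theorem quatM_isHermitian {p q : ℍ[ℝ]} (hp : p.re = 0) (hq : q.re = 0) :
    (quatM p q).IsHermitian := by
  rw [IsHermitian, conjTranspose_eq_transpose_of_trivial, quatM_transpose,
    Quaternion.star_eq_neg.mpr hp, Quaternion.star_eq_neg.mpr hq, quatM_neg_left,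
    quatM_neg_right, neg_neg]

noncomputable def quatSymMatrix (a : ℝ) (p q r : ℍ[ℝ]) : Matrix (Fin 4) (Fin 4) ℝ :=
  a • quatM 1 1 + quatM p qi + quatM q qj + quatM r qk

theorem quatSymMatrix_mul_neg {a : ℝ} {p q r : ℍ[ℝ]}
    (hp : p.re = 0) (hq : q.re = 0) (hr : r.re = 0)
    (h1 : a • q = qcross r p) (h2 : qdot p q = 0) (h3 : qdot r q = 0)
    (h4 : a ^ 2 - qdot p p + qdot q q - qdot r r = 1) :
    quatSymMatrix a p q r * quatSymMatrix a (-p) q (-r) = 1 := by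
  have hsq {x : ℍ[ℝ]} (hx : x.re = 0) : quatM (x * x) 1 = -qdot x x • 1 := by
    rw [mul_self_of_re_eq_zero hx, quatM_smul_one_one]
  have hpq : quatM (p * q) qk + quatM (q * p) qk = 0 := by
    rw [← quatM_add_left, mul_add_mul_swap_of_re_eq_zero hp hq, h2, quatM_smul_left]
    simp
  have hrq : quatM (r * q) qi + quatM (q * r) qi = 0 := by
    rw [← quatM_add_left, mul_add_mul_swap_of_re_eq_zero hr hq, h3, quatM_smul_left]
    simp
  have hrp : quatM (r * p) qj - quatM (p * r) qj = (2 * a) • quatM q qj := by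
    rw [← quatM_sub_left, mul_sub_mul_swap_of_re_eq_zero hr hp, ← h1, smul_smul, quatM_smul_left]
  simp only [quatSymMatrix, quatM_one_one, add_mul, mul_add, smul_mul_assoc, mul_smul_comm, one_mul,
    mul_one, quatM_mul_quatM, quatM_neg_left, mul_neg, qi_mul_qi, qj_mul_qj, qk_mul_qk,
    qi_mul_qj, qj_mul_qi, qj_mul_qk, qk_mul_qj, qk_mul_qi, qi_mul_qk, quatM_neg_right]
  linear_combination (norm := module)
    hsq hp - hsq hq + hsq hr + hpq - hrp - hrq + h4 • (1 : Matrix (Fin 4) (Fin 4) ℝ)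

theorem quatSymMatrix_add_neg (a : ℝ) (p q r : ℍ[ℝ]) :
    quatSymMatrix a p q r + quatSymMatrix a (-p) q (-r) = (2 : ℝ) • (a • 1 + quatM q qj) := by
  simp only [quatSymMatrix, quatM_neg_left, quatM_one_one]
  module

theorem quatM_qj_mul_self {q : ℍ[ℝ]} (hq : q.re = 0) :
    quatM q qj * quatM q qj = qdot q q • 1 := by
  rw [quatM_mul_quatM, qj_mul_qj, quatM_neg_right, mul_self_of_re_eq_zero hq, quatM_smul_one_one,
    neg_smul, neg_neg]

theorem quatSymMatrix_isHermitian {a : ℝ} {p q r : ℍ[ℝ]} (hp : p.re = 0) (hq : q.re = 0)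
    (hr : r.re = 0) : (quatSymMatrix a p q r).IsHermitian := by
  rw [quatSymMatrix, quatM_one_one]
  exact ((((isHermitian_one.smul (IsSelfAdjoint.all a)).add (quatM_isHermitian hp rfl)).add
    (quatM_isHermitian hq rfl)).add (quatM_isHermitian hr rfl))

theorem trace_quatSymMatrix (a : ℝ) (p q r : ℍ[ℝ]) : (quatSymMatrix a p q r).trace = 4 * a := by
  simp only [quatSymMatrix, trace_add, trace_smul, trace_quatM]
  simp [qi, qj, qk]
  ring

theorem trace_quatSymMatrix_mul_self {a : ℝ} {p q r : ℍ[ℝ]} (hp : p.re = 0) (hq : q.re = 0)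
    (hr : r.re = 0) :
    (quatSymMatrix a p q r * quatSymMatrix a p q r).trace =
      4 * (a ^ 2 + qdot p p + qdot q q + qdot r r) := by
  simp only [quatSymMatrix, quatM_one_one, add_mul, mul_add, smul_mul_assoc, mul_smul_comm, one_mul,
    mul_one, quatM_mul_quatM, qi_mul_qi, qj_mul_qj, qk_mul_qk, qi_mul_qj, qj_mul_qi, qj_mul_qk,
    qk_mul_qj, qk_mul_qi, qi_mul_qk, quatM_neg_right, trace_add, trace_smul, trace_neg, trace_one,
    trace_quatM, mul_self_of_re_eq_zero hp, mul_self_of_re_eq_zero hq, mul_self_of_re_eq_zero hr]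
  simp [qi, qj, qk]
  ring

theorem posDef_quatSymMatrix_iff {a : ℝ} {p q r : ℍ[ℝ]}
    (hp : p.re = 0) (hq : q.re = 0) (hr : r.re = 0)
    (h1 : a • q = qcross r p) (h2 : qdot p q = 0) (h3 : qdot r q = 0)
    (h4 : a ^ 2 - qdot p p + qdot q q - qdot r r = 1) :
    (quatSymMatrix a p q r).PosDef ↔ 0 < a ∧ 0 < 2 * a ^ 2 - 2 * qdot q q + 1 := by
  constructor
  · intro hX
    have htr := hX.trace_pos
    have hsq := hX.trace_mul_self_lt_sq_trace (by simp)
    rw [trace_quatSymMatrix] at htr hsq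
    rw [trace_quatSymMatrix_mul_self hp hq hr] at hsq
    constructor <;> nlinarith
  · rintro ⟨ha, hc⟩
    exact posDef_of_mul_eq_one_of_add_eq (quatSymMatrix_isHermitian hp hq hr)
      (quatM_isHermitian hq rfl) (quatSymMatrix_mul_neg hp hq hr h1 h2 h3 h4)
      (quatSymMatrix_add_neg a p q r) (quatM_qj_mul_self hq) (by linarith) (by nlinarith)

theorem stmt_16 (a : ℝ) (p q r : Quaternion ℝ)
    (hp : p.re = 0) (hq : q.re = 0) (hr : r.re = 0)
    (h1 : a • q = qcross r p) (h2 : qdot p q = 0) (h3 : qdot r q = 0)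
    (h4 : a ^ 2 - qdot p p + qdot q q - qdot r r = 1)
    (X : Matrix (Fin 4) (Fin 4) ℝ)
    (hXdef : X = a • quatM 1 1 + quatM p qi + quatM q qj + quatM r qk) :
    (X.PosDef ↔ 0 < a ∧ 0 < 2 * a ^ 2 - 2 * qdot q q + 1) ∧
    (0 < a → q = 0 → X.PosDef) := by
  have hX : X.PosDef ↔ 0 < a ∧ 0 < 2 * a ^ 2 - 2 * qdot q q + 1 := by
    rw [hXdef]
    exact posDef_quatSymMatrix_iff hp hq hr h1 h2 h3 h4
  refine ⟨hX, fun ha hq0 => hX.mpr ⟨ha, ?_⟩⟩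
  simp [hq0, qdot]
  positivity
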